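/- arXiv:2303.09481 — 2 statements merged into one kernel-verified Lean document; each statement's English description precedes it below -/
import Mathlib

section
/- Let U and Q be real normed vector spaces. Let m, a, b : U × U → ℝ and m_T, a_T : Q × Q → ℝ and c : U × Q → ℝ be continuous bilinear forms, with m, a and m_T symmetric. Let T_f > 0, let F : [0, T_f] → U* and H : [0, T_f] → Q* be continuous families of continuous linear functionals, and suppose X ∈ C²([0, T_f]; U) and Θ ∈ C¹([0, T_f]; Q) satisfy, for every t ∈ [0, T_f] and every (v, S) ∈ U × Q: m(Ẍ(t), v) + b(Ẋ(t), v) + m_T(Θ̇(t), S) + c(Ẋ(t), S) + a(X(t), v) + a_T(Θ(t), S) − c(v, Θ(t)) = F(t)(v) + H(t)(S). Then the energy E(t) = (1/2) [ m(Ẋ(t), Ẋ(t)) + m_T(Θ(t), Θ(t)) + a(X(t), X(t)) ] is differentiable on [0, T_f] and E′(t) + b(Ẋ(t), Ẋ(t)) + a_T(Θ(t), Θ(t)) = F(t)(Ẋ(t)) + H(t)(Θ(t)) for every t ∈ [0, T_f]. -/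
open Set

/-- Differential energy identity for the abstract semi-discrete
thermo-poroelastic system: if `X ∈ C²([0,T_f];U)` and `Θ ∈ C¹([0,T_f];Q)` satisfy
`m(Ẍ,v) + b(Ẋ,v) + m_T(Θ̇,S) + c(Ẋ,S) + a(X,v) + a_T(Θ,S) − c(v,Θ) = F(v) + H(S)`
for all `(v,S)`, then `E(t) = ½[m(Ẋ,Ẋ) + m_T(Θ,Θ) + a(X,X)]` is differentiable with
`E′(t) + b(Ẋ,Ẋ) + a_T(Θ,Θ) = F(Ẋ) + H(Θ)`. -/
theorem stmt_5 {U Q : Type*} [NormedAddCommGroup U] [NormedSpace ℝ U]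
    [NormedAddCommGroup Q] [NormedSpace ℝ Q]
    (m a b : U →L[ℝ] U →L[ℝ] ℝ) (mT aT : Q →L[ℝ] Q →L[ℝ] ℝ) (c : U →L[ℝ] Q →L[ℝ] ℝ)
    (hm_symm : ∀ x y : U, m x y = m y x)
    (ha_symm : ∀ x y : U, a x y = a y x)
    (hmT_symm : ∀ x y : Q, mT x y = mT y x)
    (Tf : ℝ) (hTf : 0 < Tf)
    (F : ℝ → (U →L[ℝ] ℝ)) (H : ℝ → (Q →L[ℝ] ℝ))
    (hF : ContinuousOn F (Icc (0 : ℝ) Tf)) (hH : ContinuousOn H (Icc (0 : ℝ) Tf))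
    (X X' X'' : ℝ → U) (Θ Θ' : ℝ → Q)
    (hX : ∀ t ∈ Icc (0 : ℝ) Tf, HasDerivWithinAt X (X' t) (Icc (0 : ℝ) Tf) t)
    (hX' : ∀ t ∈ Icc (0 : ℝ) Tf, HasDerivWithinAt X' (X'' t) (Icc (0 : ℝ) Tf) t)
    (hX'' : ContinuousOn X'' (Icc (0 : ℝ) Tf))
    (hΘ : ∀ t ∈ Icc (0 : ℝ) Tf, HasDerivWithinAt Θ (Θ' t) (Icc (0 : ℝ) Tf) t)
    (hΘ' : ContinuousOn Θ' (Icc (0 : ℝ) Tf))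
    (heq : ∀ t ∈ Icc (0 : ℝ) Tf, ∀ (v : U) (S : Q),
      m (X'' t) v + b (X' t) v + mT (Θ' t) S + c (X' t) S
        + a (X t) v + aT (Θ t) S - c v (Θ t) = F t v + H t S) :
    ∀ t ∈ Icc (0 : ℝ) Tf,
      HasDerivWithinAt
        (fun s => (1 / 2 : ℝ) * (m (X' s) (X' s) + mT (Θ s) (Θ s) + a (X s) (X s)))
        (F t (X' t) + H t (Θ t) - b (X' t) (X' t) - aT (Θ t) (Θ t))
        (Icc (0 : ℝ) Tf) t := by
  intro t ht
  have hmap : ∀ (B : U →L[ℝ] U →L[ℝ] ℝ) (f f' : ℝ → U)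
      (hf : HasDerivWithinAt f (f' t) (Icc (0:ℝ) Tf) t),
      HasDerivWithinAt (fun s => B (f s)) (B (f' t)) (Icc (0:ℝ) Tf) t :=
    fun B f f' hf => B.hasFDerivAt.comp_hasDerivWithinAt t hf
  have hmapQ : ∀ (B : Q →L[ℝ] Q →L[ℝ] ℝ) (f f' : ℝ → Q)
      (hf : HasDerivWithinAt f (f' t) (Icc (0:ℝ) Tf) t),
      HasDerivWithinAt (fun s => B (f s)) (B (f' t)) (Icc (0:ℝ) Tf) t :=
    fun B f f' hf => B.hasFDerivAt.comp_hasDerivWithinAt t hf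
  have h1 : HasDerivWithinAt (fun s => m (X' s) (X' s))
      (m (X'' t) (X' t) + m (X' t) (X'' t)) (Icc (0:ℝ) Tf) t :=
    (hmap m X' X'' (hX' t ht)).clm_apply (hX' t ht)
  have h2 : HasDerivWithinAt (fun s => mT (Θ s) (Θ s))
      (mT (Θ' t) (Θ t) + mT (Θ t) (Θ' t)) (Icc (0:ℝ) Tf) t :=
    (hmapQ mT Θ Θ' (hΘ t ht)).clm_apply (hΘ t ht)
  have h3 : HasDerivWithinAt (fun s => a (X s) (X s))
      (a (X' t) (X t) + a (X t) (X' t)) (Icc (0:ℝ) Tf) t :=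
    (hmap a X X' (hX t ht)).clm_apply (hX t ht)
  have hE := (((h1.add h2).add h3).const_mul ((1:ℝ)/2))
  have key := heq t ht (X' t) (Θ t)
  have hgoal : (1/2 : ℝ) * ((m (X'' t) (X' t) + m (X' t) (X'' t))
      + (mT (Θ' t) (Θ t) + mT (Θ t) (Θ' t)) + (a (X' t) (X t) + a (X t) (X' t)))
      = F t (X' t) + H t (Θ t) - b (X' t) (X' t) - aT (Θ t) (Θ t) := by
    rw [hm_symm (X' t) (X'' t), hmT_symm (Θ t) (Θ' t), ha_symm (X' t) (X t)]
    linarith [key]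
  rw [hgoal] at hE
  exact hE
end

section
/- Let U and Q be real normed vector spaces. Let m, a, b : U × U → ℝ and m_T, a_T : Q × Q → ℝ and c : U × Q → ℝ be continuous bilinear forms, with m, a and m_T symmetric. Let T_f > 0, let F : [0, T_f] → U* and H : [0, T_f] → Q* be continuous families of continuous linear functionals, and suppose X ∈ C²([0, T_f]; U) and Θ ∈ C¹([0, T_f]; Q) satisfy, for every t ∈ [0, T_f] and every (v, S) ∈ U × Q: m(Ẍ(t), v) + b(Ẋ(t), v) + m_T(Θ̇(t), S) + c(Ẋ(t), S) + a(X(t), v) + a_T(Θ(t), S) − c(v, Θ(t)) = F(t)(v) + H(t)(S). Then for every t ∈ [0, T_f]: m(Ẋ(t), Ẋ(t)) + m_T(Θ(t), Θ(t)) + a(X(t), X(t)) + 2 ∫₀ᵗ [ b(Ẋ(s), Ẋ(s)) + a_T(Θ(s), Θ(s)) ] ds = m(Ẋ(0), Ẋ(0)) + m_T(Θ(0), Θ(0)) + a(X(0), X(0)) + 2 ∫₀ᵗ [ F(s)(Ẋ(s)) + H(s)(Θ(s)) ] ds. -/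
open Set MeasureTheory

/- Testing the equation with `(Ẋ, Θ)` turns it into `E' = 2 (F(Ẋ) + H(Θ)) - 2 (b(Ẋ,Ẋ) + a_T(Θ,Θ))`
for the energy `E = m(Ẋ,Ẋ) + m_T(Θ,Θ) + a(X,X)`: symmetry of `m`, `m_T` and `a` makes the
derivative of each quadratic term twice the corresponding term of the equation, and the two
coupling terms `c(Ẋ,Θ)` and `-c(Ẋ,Θ)` cancel. The identity is then the fundamental theorem of
calculus on `[0, t]`. -/

theorem HasDerivWithinAt.clm_apply_self_of_symm {𝕜 E : Type*} [NontriviallyNormedField 𝕜]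
    [NormedAddCommGroup E] [NormedSpace 𝕜 E] {B : E →L[𝕜] E →L[𝕜] 𝕜}
    (hB : ∀ x y, B x y = B y x) {x : 𝕜 → E} {x' : E} {s : Set 𝕜} {t : 𝕜}
    (hx : HasDerivWithinAt x x' s t) :
    HasDerivWithinAt (fun r => B (x r) (x r)) (2 * B x' (x t)) s t := by
  refine ((B.hasFDerivAt.comp_hasDerivWithinAt t hx).clm_apply hx).congr_deriv ?_
  simp only [Function.comp_apply, hB (x t) x', two_mul]

theorem intervalIntegral.integral_eq_sub_of_hasDerivWithinAt_Icc {E : Type*}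
    [NormedAddCommGroup E] [NormedSpace ℝ E] [CompleteSpace E] {f f' : ℝ → E} {a b : ℝ}
    (hab : a ≤ b) (hderiv : ∀ x ∈ Icc a b, HasDerivWithinAt f (f' x) (Icc a b) x)
    (hint : IntervalIntegrable f' volume a b) : ∫ y in a..b, f' y = f b - f a :=
  integral_eq_sub_of_hasDerivAt_of_le hab (fun x hx => (hderiv x hx).continuousWithinAt)
    (fun x hx => (hderiv x (Ioo_subset_Icc_self hx)).hasDerivAt (Icc_mem_nhds hx.1 hx.2)) hint

theorem hasDerivWithinAt_energy {U Q : Type*} [NormedAddCommGroup U] [NormedSpace ℝ U]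
    [NormedAddCommGroup Q] [NormedSpace ℝ Q]
    {m a b : U →L[ℝ] U →L[ℝ] ℝ} {mT aT : Q →L[ℝ] Q →L[ℝ] ℝ} {c : U →L[ℝ] Q →L[ℝ] ℝ}
    (hm : ∀ x y, m x y = m y x) (ha : ∀ x y, a x y = a y x) (hmT : ∀ x y, mT x y = mT y x)
    {f : U →L[ℝ] ℝ} {h : Q →L[ℝ] ℝ} {X X' : ℝ → U} {Θ : ℝ → Q} {X''t : U} {Θ't : Q}
    {s : Set ℝ} {t : ℝ} (hX : HasDerivWithinAt X (X' t) s t)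
    (hX' : HasDerivWithinAt X' X''t s t) (hΘ : HasDerivWithinAt Θ Θ't s t)
    (heq : ∀ (v : U) (S : Q), m X''t v + b (X' t) v + mT Θ't S + c (X' t) S
        + a (X t) v + aT (Θ t) S - c v (Θ t) = f v + h S) :
    HasDerivWithinAt (fun r => m (X' r) (X' r) + mT (Θ r) (Θ r) + a (X r) (X r))
      (2 * (f (X' t) + h (Θ t)) - 2 * (b (X' t) (X' t) + aT (Θ t) (Θ t))) s t := by
  refine (((hX'.clm_apply_self_of_symm hm).add (hΘ.clm_apply_self_of_symm hmT)).add
    (hX.clm_apply_self_of_symm ha)).congr_deriv ?_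
  linarith [heq (X' t) (Θ t), ha (X t) (X' t)]

theorem stmt_6_general {U Q : Type*} [NormedAddCommGroup U] [NormedSpace ℝ U]
    [NormedAddCommGroup Q] [NormedSpace ℝ Q]
    (m a b : U →L[ℝ] U →L[ℝ] ℝ) (mT aT : Q →L[ℝ] Q →L[ℝ] ℝ) (c : U →L[ℝ] Q →L[ℝ] ℝ)
    (hm_symm : ∀ x y : U, m x y = m y x)
    (ha_symm : ∀ x y : U, a x y = a y x)
    (hmT_symm : ∀ x y : Q, mT x y = mT y x)
    (Tf : ℝ)
    (F : ℝ → (U →L[ℝ] ℝ)) (H : ℝ → (Q →L[ℝ] ℝ))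
    (hF : ContinuousOn F (Icc (0 : ℝ) Tf)) (hH : ContinuousOn H (Icc (0 : ℝ) Tf))
    (X X' X'' : ℝ → U) (Θ Θ' : ℝ → Q)
    (hX : ∀ t ∈ Icc (0 : ℝ) Tf, HasDerivWithinAt X (X' t) (Icc (0 : ℝ) Tf) t)
    (hX' : ∀ t ∈ Icc (0 : ℝ) Tf, HasDerivWithinAt X' (X'' t) (Icc (0 : ℝ) Tf) t)
    (hΘ : ∀ t ∈ Icc (0 : ℝ) Tf, HasDerivWithinAt Θ (Θ' t) (Icc (0 : ℝ) Tf) t)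
    (heq : ∀ t ∈ Icc (0 : ℝ) Tf, ∀ (v : U) (S : Q),
      m (X'' t) v + b (X' t) v + mT (Θ' t) S + c (X' t) S
        + a (X t) v + aT (Θ t) S - c v (Θ t) = F t v + H t S) :
    ∀ t ∈ Icc (0 : ℝ) Tf,
      m (X' t) (X' t) + mT (Θ t) (Θ t) + a (X t) (X t)
          + 2 * ∫ s in (0 : ℝ)..t, (b (X' s) (X' s) + aT (Θ s) (Θ s))
        = m (X' 0) (X' 0) + mT (Θ 0) (Θ 0) + a (X 0) (X 0)
          + 2 * ∫ s in (0 : ℝ)..t, (F s (X' s) + H s (Θ s)) := by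
  rintro t ⟨ht0, htT⟩
  have hsub : Icc 0 t ⊆ Icc 0 Tf := Icc_subset_Icc_right htT
  have hX'c : ContinuousOn X' (Icc 0 Tf) := fun s hs => (hX' s hs).continuousWithinAt
  have hΘc : ContinuousOn Θ (Icc 0 Tf) := fun s hs => (hΘ s hs).continuousWithinAt
  have hdiss : IntervalIntegrable (fun s => b (X' s) (X' s) + aT (Θ s) (Θ s)) volume 0 t :=
    (ContinuousOn.mono (by fun_prop) hsub).intervalIntegrable_of_Icc ht0
  have hwork : IntervalIntegrable (fun s => F s (X' s) + H s (Θ s)) volume 0 t :=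
    (((hF.clm_apply hX'c).add (hH.clm_apply hΘc)).mono hsub).intervalIntegrable_of_Icc ht0
  have hFTC := intervalIntegral.integral_eq_sub_of_hasDerivWithinAt_Icc ht0
    (fun s hs => (hasDerivWithinAt_energy hm_symm ha_symm hmT_symm (hX s (hsub hs))
      (hX' s (hsub hs)) (hΘ s (hsub hs)) (heq s (hsub hs))).mono hsub)
    ((hwork.const_mul 2).sub (hdiss.const_mul 2))
  rw [intervalIntegral.integral_sub (hwork.const_mul 2) (hdiss.const_mul 2),
    intervalIntegral.integral_const_mul, intervalIntegral.integral_const_mul] at hFTC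
  linarith

/-- Integrated energy identity for the abstract semi-discrete
thermo-poroelastic system: under the variational equation tested with `(Ẋ, Θ)`, for every
`t ∈ [0, T_f]`,
`m(Ẋ(t),Ẋ(t)) + m_T(Θ(t),Θ(t)) + a(X(t),X(t)) + 2∫₀ᵗ [b(Ẋ,Ẋ) + a_T(Θ,Θ)]
  = m(Ẋ(0),Ẋ(0)) + m_T(Θ(0),Θ(0)) + a(X(0),X(0)) + 2∫₀ᵗ [F(Ẋ) + H(Θ)]`. -/
theorem stmt_6 {U Q : Type*} [NormedAddCommGroup U] [NormedSpace ℝ U]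
    [NormedAddCommGroup Q] [NormedSpace ℝ Q]
    (m a b : U →L[ℝ] U →L[ℝ] ℝ) (mT aT : Q →L[ℝ] Q →L[ℝ] ℝ) (c : U →L[ℝ] Q →L[ℝ] ℝ)
    (hm_symm : ∀ x y : U, m x y = m y x)
    (ha_symm : ∀ x y : U, a x y = a y x)
    (hmT_symm : ∀ x y : Q, mT x y = mT y x)
    (Tf : ℝ) (hTf : 0 < Tf)
    (F : ℝ → (U →L[ℝ] ℝ)) (H : ℝ → (Q →L[ℝ] ℝ))
    (hF : ContinuousOn F (Icc (0 : ℝ) Tf)) (hH : ContinuousOn H (Icc (0 : ℝ) Tf))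
    (X X' X'' : ℝ → U) (Θ Θ' : ℝ → Q)
    (hX : ∀ t ∈ Icc (0 : ℝ) Tf, HasDerivWithinAt X (X' t) (Icc (0 : ℝ) Tf) t)
    (hX' : ∀ t ∈ Icc (0 : ℝ) Tf, HasDerivWithinAt X' (X'' t) (Icc (0 : ℝ) Tf) t)
    (hX'' : ContinuousOn X'' (Icc (0 : ℝ) Tf))
    (hΘ : ∀ t ∈ Icc (0 : ℝ) Tf, HasDerivWithinAt Θ (Θ' t) (Icc (0 : ℝ) Tf) t)
    (hΘ' : ContinuousOn Θ' (Icc (0 : ℝ) Tf))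
    (heq : ∀ t ∈ Icc (0 : ℝ) Tf, ∀ (v : U) (S : Q),
      m (X'' t) v + b (X' t) v + mT (Θ' t) S + c (X' t) S
        + a (X t) v + aT (Θ t) S - c v (Θ t) = F t v + H t S) :
    ∀ t ∈ Icc (0 : ℝ) Tf,
      m (X' t) (X' t) + mT (Θ t) (Θ t) + a (X t) (X t)
          + 2 * ∫ s in (0 : ℝ)..t, (b (X' s) (X' s) + aT (Θ s) (Θ s))
        = m (X' 0) (X' 0) + mT (Θ 0) (Θ 0) + a (X 0) (X 0)
          + 2 * ∫ s in (0 : ℝ)..t, (F s (X' s) + H s (Θ s)) :=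
  stmt_6_general m a b mT aT c hm_symm ha_symm hmT_symm Tf F H hF hH X X' X'' Θ Θ' hX hX' hΘ heq
end
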